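/- arXiv:math/0404409 — 2 statements merged into one kernel-verified Lean document; each statement's English description precedes it below -/
import Mathlib

section
/- Let H be a complex Hilbert space and M > 0. For each τ ∈ (0,1) let ψ_τ : ℝ → H be strongly measurable with ‖ψ_τ(s)‖ ≤ M for almost every s, and let ψ : ℝ → H be strongly measurable with ‖ψ(s)‖ ≤ M for almost every s. Define, for t > 0 and s ∈ ℝ, Ψ_τ(t + is) = (P_t ∗ ψ_τ)(s) and Ψ(t + is) = (P_t ∗ ψ)(s). Assume that for every z ∈ ℂ with Re z > 0, Ψ_τ(z) → Ψ(z) in H as τ → 0⁺. Then for every v ∈ L¹(ℝ, H), ∫_ℝ ⟨v(t), ψ_τ(t)⟩ dt → ∫_ℝ ⟨v(t), ψ(t)⟩ dt as τ → 0⁺. -/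
open MeasureTheory Filter Real
open scoped ComplexInnerProductSpace Topology

/-!
Pairing against `ψ_τ` is a family of functionals on `L¹(ℝ, H)` bounded by `M`, so it suffices to
prove convergence on a dense set. Since `P_t` is even, Fubini gives
`∫ ⟪P_t ∗ g, ψ_τ⟫ = ∫ ⟪g(s), Ψ_τ(t + is)⟫ ds`, which converges by dominated convergence because
`‖Ψ_τ‖ ≤ M`. The Poisson integrals `P_t ∗ v` are dense:
`‖v - P_t ∗ v‖₁ ≤ ∫ P_t(y) ‖v(· - y) - v‖₁ dy`, which tends to `0` as `t → 0⁺` by continuity of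
translation in `L¹`, `P_t` being an approximate identity.
-/

noncomputable section

def halfPlanePoissonKernel (t s : ℝ) : ℝ := t / π / (t ^ 2 + s ^ 2)

/-- `halfPlanePoissonIntegral t f s = (P_t ∗ f)(s)` is the value at `t + is` of the Poisson
extension of `f` to the right half-plane. -/
def halfPlanePoissonIntegral {E : Type*} [NormedAddCommGroup E] [NormedSpace ℝ E]
    (t : ℝ) (f : ℝ → E) (s : ℝ) : E :=
  ∫ s', halfPlanePoissonKernel t (s - s') • f s'

end

section PoissonKernel

variable {t : ℝ}

lemma halfPlanePoissonKernel_nonneg (ht : 0 ≤ t) (s : ℝ) : 0 ≤ halfPlanePoissonKernel t s := by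
  unfold halfPlanePoissonKernel; positivity

lemma halfPlanePoissonKernel_neg (t s : ℝ) :
    halfPlanePoissonKernel t (-s) = halfPlanePoissonKernel t s := by
  simp [halfPlanePoissonKernel]

lemma continuous_halfPlanePoissonKernel (ht : t ≠ 0) : Continuous (halfPlanePoissonKernel t) :=
  continuous_const.div (by fun_prop) fun s => by positivity

lemma halfPlanePoissonKernel_one (s : ℝ) : halfPlanePoissonKernel 1 s = π⁻¹ * (1 + s ^ 2)⁻¹ := by
  simp [halfPlanePoissonKernel, div_eq_mul_inv]

lemma halfPlanePoissonKernel_eq_inv_mul (ht : t ≠ 0) (s : ℝ) :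
    halfPlanePoissonKernel t s = t⁻¹ * halfPlanePoissonKernel 1 (t⁻¹ * s) := by
  rw [halfPlanePoissonKernel_one, halfPlanePoissonKernel]
  field_simp

lemma halfPlanePoissonKernel_le (ht : 0 < t) (s : ℝ) : halfPlanePoissonKernel t s ≤ (π * t)⁻¹ := by
  calc halfPlanePoissonKernel t s ≤ t / π / t ^ 2 := by
        unfold halfPlanePoissonKernel; gcongr; nlinarith [sq_nonneg s]
    _ = (π * t)⁻¹ := by field_simp

lemma integrable_halfPlanePoissonKernel (ht : t ≠ 0) : Integrable (halfPlanePoissonKernel t) := by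
  have h1 : Integrable (halfPlanePoissonKernel 1) := by
    rw [funext halfPlanePoissonKernel_one]
    exact integrable_inv_one_add_sq.const_mul π⁻¹
  simpa only [← halfPlanePoissonKernel_eq_inv_mul ht] using
    (h1.comp_mul_left' (inv_ne_zero ht)).const_mul t⁻¹

lemma integral_halfPlanePoissonKernel (ht : 0 < t) : ∫ s, halfPlanePoissonKernel t s = 1 := by
  simp_rw [halfPlanePoissonKernel_eq_inv_mul ht.ne', integral_const_mul,
    Measure.integral_comp_mul_left, halfPlanePoissonKernel_one, integral_const_mul,
    integral_univ_inv_one_add_sq, inv_inv, abs_of_pos ht, smul_eq_mul]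
  field_simp

lemma mul_halfPlanePoissonKernel_mul (ht : 0 < t) (u : ℝ) :
    t * halfPlanePoissonKernel t (t * u) = halfPlanePoissonKernel 1 u := by
  rw [halfPlanePoissonKernel_eq_inv_mul ht.ne', inv_mul_cancel_left₀ ht.ne',
    mul_inv_cancel_left₀ ht.ne']

end PoissonKernel

section PoissonIntegral

variable {E : Type*} [NormedAddCommGroup E] [NormedSpace ℝ E] {t M : ℝ}

lemma MeasureTheory.Integrable.halfPlanePoissonKernel_sub_smul (ht : 0 < t) {g : ℝ → E}
    (hg : Integrable g) (s : ℝ) : Integrable fun s' => halfPlanePoissonKernel t (s - s') • g s' :=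
  hg.bdd_smul (π * t)⁻¹
    ((continuous_halfPlanePoissonKernel ht.ne').comp (continuous_sub_left s)).aestronglyMeasurable
    (ae_of_all _ fun s' => by
      rw [Real.norm_of_nonneg (halfPlanePoissonKernel_nonneg ht.le _)]
      exact halfPlanePoissonKernel_le ht _)

lemma integrable_halfPlanePoissonKernel_sub_smul_of_bound (ht : 0 < t) {φ : ℝ → E}
    (hφ : AEStronglyMeasurable φ) (hφM : ∀ᵐ s, ‖φ s‖ ≤ M) (s : ℝ) :
    Integrable fun s' => halfPlanePoissonKernel t (s - s') • φ s' :=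
  ((integrable_halfPlanePoissonKernel ht.ne').comp_sub_left s).smul_bdd M hφ hφM

lemma norm_halfPlanePoissonIntegral_le (ht : 0 < t) {φ : ℝ → E} (hφM : ∀ᵐ s, ‖φ s‖ ≤ M)
    (s : ℝ) : ‖halfPlanePoissonIntegral t φ s‖ ≤ M := by
  have hP := ((integrable_halfPlanePoissonKernel ht.ne').comp_sub_left s).mul_const M
  calc ‖halfPlanePoissonIntegral t φ s‖ ≤ ∫ s', halfPlanePoissonKernel t (s - s') * M := by
        refine norm_integral_le_of_norm_le hP ?_
        filter_upwards [hφM] with s' hs'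
        rw [norm_smul, Real.norm_of_nonneg (halfPlanePoissonKernel_nonneg ht.le _)]
        exact mul_le_mul_of_nonneg_left hs' (halfPlanePoissonKernel_nonneg ht.le _)
    _ = M := by
        rw [integral_mul_const, integral_sub_left_eq_self (halfPlanePoissonKernel t),
          integral_halfPlanePoissonKernel ht, one_mul]

lemma MeasureTheory.AEStronglyMeasurable.halfPlanePoissonIntegral (ht : t ≠ 0) {φ : ℝ → E}
    (hφ : AEStronglyMeasurable φ) : AEStronglyMeasurable (halfPlanePoissonIntegral t φ) :=
  AEStronglyMeasurable.integral_prod_right'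
    (f := fun p : ℝ × ℝ => halfPlanePoissonKernel t (p.1 - p.2) • φ p.2)
    (((continuous_halfPlanePoissonKernel ht).comp
      (continuous_fst.sub continuous_snd)).aestronglyMeasurable.smul hφ.comp_snd)

lemma MeasureTheory.Integrable.integrable_halfPlanePoissonIntegral (ht : t ≠ 0) {g : ℝ → E}
    (hg : Integrable g) : Integrable (halfPlanePoissonIntegral t g) :=
  (Integrable.convolution_integrand (ContinuousLinearMap.lsmul ℝ ℝ).flip hg
    (integrable_halfPlanePoissonKernel ht)).integral_prod_left

lemma integral_halfPlanePoissonKernel_smul_eq_rescale (ht : 0 < t) (f : ℝ → E) :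
    ∫ y, halfPlanePoissonKernel t y • f y = ∫ u, halfPlanePoissonKernel 1 u • f (t * u) := by
  have := Measure.integral_comp_mul_left (fun y => halfPlanePoissonKernel t y • f y) t
  rw [abs_of_pos (inv_pos.2 ht)] at this
  simp_rw [← mul_halfPlanePoissonKernel_mul ht, mul_smul, integral_smul, this, smul_smul,
    mul_inv_cancel₀ ht.ne', one_smul]

end PoissonIntegral

section ApproximateIdentity

variable {E : Type*} [NormedAddCommGroup E] [NormedSpace ℝ E] [CompleteSpace E]

theorem tendsto_integral_halfPlanePoissonKernel_smul {f : ℝ → E} {C : ℝ} (hf : Continuous f)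
    (hfC : ∀ y, ‖f y‖ ≤ C) :
    Tendsto (fun t => ∫ y, halfPlanePoissonKernel t y • f y) (𝓝[>] 0) (𝓝 (f 0)) := by
  have hP := integrable_halfPlanePoissonKernel one_ne_zero
  have hlim : Tendsto (fun t => ∫ u, halfPlanePoissonKernel 1 u • f (t * u)) (𝓝[>] 0)
      (𝓝 (∫ u, halfPlanePoissonKernel 1 u • f 0)) := by
    refine tendsto_integral_filter_of_dominated_convergence
      (fun u => halfPlanePoissonKernel 1 u * C)
      (Eventually.of_forall fun t => ?_) (Eventually.of_forall fun t => ae_of_all _ fun u => ?_)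
      (hP.mul_const C) (ae_of_all _ fun u => ?_)
    · exact ((continuous_halfPlanePoissonKernel one_ne_zero).smul
        (hf.comp (continuous_const_mul t))).aestronglyMeasurable
    · rw [norm_smul, Real.norm_of_nonneg (halfPlanePoissonKernel_nonneg zero_le_one _)]
      exact mul_le_mul_of_nonneg_left (hfC _) (halfPlanePoissonKernel_nonneg zero_le_one _)
    · refine tendsto_const_nhds.smul (hf.continuousAt.tendsto.comp ?_)
      simpa using ((continuous_mul_const u).tendsto 0).mono_left nhdsWithin_le_nhds
  rw [integral_smul_const, integral_halfPlanePoissonKernel one_pos, one_smul] at hlim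
  exact hlim.congr' (eventually_nhdsWithin_of_forall fun t ht =>
    (integral_halfPlanePoissonKernel_smul_eq_rescale ht f).symm)

end ApproximateIdentity

section Translation

variable {E : Type*} [NormedAddCommGroup E] {g : ℝ → E}

-- Via the continuous action of `ℝᵈᵃᵃ` on `L¹(ℝ, E)` by translations.
theorem MeasureTheory.Integrable.continuous_integral_norm_comp_sub_sub (hg : Integrable g) :
    Continuous fun y => ∫ s, ‖g (s - y) - g s‖ := by
  have : Fact ((1 : ENNReal) ≠ ⊤) := ⟨ENNReal.one_ne_top⟩
  let G := hg.toL1 g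
  have key (y : ℝ) : ∫ s, ‖g (s - y) - g s‖ = dist (DomAddAct.mk (-y) +ᵥ G) G := by
    rw [L1.dist_eq_integral_dist]
    refine integral_congr_ae ?_
    filter_upwards [DomAddAct.vadd_Lp_ae_eq (DomAddAct.mk (-y)) G, hg.coeFn_toL1,
      (measurePreserving_sub_right volume y).quasiMeasurePreserving.ae hg.coeFn_toL1]
      with s h1 h2 h3
    rw [dist_eq_norm, h1, Equiv.symm_apply_apply, vadd_eq_add, neg_add_eq_sub, h2, h3]
  simp_rw [key]
  fun_prop

lemma MeasureTheory.Integrable.integral_norm_comp_sub_sub_le (hg : Integrable g) (y : ℝ) :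
    ∫ s, ‖g (s - y) - g s‖ ≤ 2 * ∫ s, ‖g s‖ := by
  have hgy : Integrable fun s => g (s - y) := hg.comp_sub_right y
  calc ∫ s, ‖g (s - y) - g s‖ ≤ ∫ s, (‖g (s - y)‖ + ‖g s‖) :=
        integral_mono_of_nonneg (ae_of_all _ fun _ => norm_nonneg _) (hgy.norm.add hg.norm)
          (ae_of_all _ fun _ => norm_sub_le _ _)
    _ = 2 * ∫ s, ‖g s‖ := by
        rw [integral_add hgy.norm hg.norm, integral_sub_right_eq_self (fun s => ‖g s‖)]
        ring

end Translation

section L1Approximation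

variable {E : Type*} [NormedAddCommGroup E] [NormedSpace ℝ E] [CompleteSpace E] {t : ℝ}
  {g : ℝ → E}

lemma MeasureTheory.Integrable.norm_sub_halfPlanePoissonIntegral_le (ht : 0 < t)
    (hg : Integrable g) (s : ℝ) :
    ‖g s - halfPlanePoissonIntegral t g s‖ ≤
      ∫ y, halfPlanePoissonKernel t y * ‖g (s - y) - g s‖ := by
  have hP := integrable_halfPlanePoissonKernel ht.ne'
  have hconv : halfPlanePoissonIntegral t g s = ∫ y, halfPlanePoissonKernel t y • g (s - y) := by
    rw [halfPlanePoissonIntegral, ← integral_sub_left_eq_self _ volume s]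
    simp_rw [sub_sub_cancel]
  have hdiff : g s - halfPlanePoissonIntegral t g s =
      ∫ y, halfPlanePoissonKernel t y • (g s - g (s - y)) := by
    simp_rw [hconv, smul_sub]
    have hPg : Integrable fun y => halfPlanePoissonKernel t y • g (s - y) := by
      simpa only [sub_sub_cancel] using (hg.halfPlanePoissonKernel_sub_smul ht s).comp_sub_left s
    rw [integral_sub (hP.smul_const _) hPg, integral_smul_const,
      integral_halfPlanePoissonKernel ht, one_smul]
  rw [hdiff]
  refine (norm_integral_le_integral_norm _).trans_eq (integral_congr_ae (ae_of_all _ fun y => ?_))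
  simp only [norm_smul, norm_sub_rev (g s),
    Real.norm_of_nonneg (halfPlanePoissonKernel_nonneg ht.le _)]

lemma MeasureTheory.Integrable.integral_norm_sub_halfPlanePoissonIntegral_le (ht : 0 < t)
    (hg : Integrable g) :
    ∫ s, ‖g s - halfPlanePoissonIntegral t g s‖ ≤
      ∫ y, halfPlanePoissonKernel t y * ∫ s, ‖g (s - y) - g s‖ := by
  have hP := integrable_halfPlanePoissonKernel ht.ne'
  have hF : Integrable (Function.uncurry fun s y => halfPlanePoissonKernel t y * ‖g (s - y) - g s‖)
      (volume.prod volume) := by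
    refine Integrable.mono' ((Integrable.convolution_integrand (ContinuousLinearMap.mul ℝ ℝ) hP
      hg.norm).add (hg.norm.mul_prod hP)) ?_ (ae_of_all _ fun p => ?_)
    · exact ((continuous_halfPlanePoissonKernel ht.ne').comp
        continuous_snd).aestronglyMeasurable.mul
        ((hg.aestronglyMeasurable.comp_quasiMeasurePreserving
          (quasiMeasurePreserving_sub_of_right_invariant volume volume)).sub
          hg.aestronglyMeasurable.comp_fst).norm
    · have hPp := halfPlanePoissonKernel_nonneg ht.le p.2
      simp only [Function.uncurry, norm_mul, norm_norm, Real.norm_of_nonneg hPp,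
        ContinuousLinearMap.mul_apply', Pi.add_apply]
      nlinarith [norm_sub_le (g (p.1 - p.2)) (g p.1)]
  calc ∫ s, ‖g s - halfPlanePoissonIntegral t g s‖
      ≤ ∫ s, ∫ y, halfPlanePoissonKernel t y * ‖g (s - y) - g s‖ :=
        integral_mono_of_nonneg (ae_of_all _ fun _ => norm_nonneg _) hF.integral_prod_left
          (ae_of_all _ (hg.norm_sub_halfPlanePoissonIntegral_le ht))
    _ = ∫ y, halfPlanePoissonKernel t y * ∫ s, ‖g (s - y) - g s‖ := by
        simp_rw [integral_integral_swap hF, integral_const_mul]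

theorem MeasureTheory.Integrable.tendsto_integral_norm_sub_halfPlanePoissonIntegral
    (hg : Integrable g) :
    Tendsto (fun t => ∫ s, ‖g s - halfPlanePoissonIntegral t g s‖) (𝓝[>] 0) (𝓝 0) := by
  have hlim := tendsto_integral_halfPlanePoissonKernel_smul
    hg.continuous_integral_norm_comp_sub_sub fun y => by
      rw [Real.norm_of_nonneg (integral_nonneg fun _ => norm_nonneg _)]
      exact hg.integral_norm_comp_sub_sub_le y
  simp only [sub_zero, sub_self, norm_zero, integral_zero, smul_eq_mul] at hlim
  refine tendsto_of_tendsto_of_tendsto_of_le_of_le' tendsto_const_nhds hlim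
    (Eventually.of_forall fun t => integral_nonneg fun _ => norm_nonneg _) ?_
  filter_upwards [self_mem_nhdsWithin] with t ht
  exact hg.integral_norm_sub_halfPlanePoissonIntegral_le ht

end L1Approximation

section InnerPairing

variable {H : Type*} [NormedAddCommGroup H] [InnerProductSpace ℂ H]

lemma norm_integral_inner_sub_integral_inner_le {α : Type*} [MeasurableSpace α] {μ : Measure α}
    {u w φ : α → H} (hu : Integrable u μ) (hw : Integrable w μ) (hφ : AEStronglyMeasurable φ μ)
    {M : ℝ} (hφM : ∀ᵐ x ∂μ, ‖φ x‖ ≤ M) :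
    ‖∫ x, ⟪u x, φ x⟫ ∂μ - ∫ x, ⟪w x, φ x⟫ ∂μ‖ ≤ M * ∫ x, ‖u x - w x‖ ∂μ := by
  have hint {v : α → H} (hv : Integrable v μ) : Integrable (fun x => ⟪v x, φ x⟫) μ :=
    (hv.norm.mul_const M).mono' (hv.aestronglyMeasurable.inner hφ) <| by
      filter_upwards [hφM] with x hx
      exact (norm_inner_le_norm _ _).trans (mul_le_mul_of_nonneg_left hx (norm_nonneg _))
  rw [← integral_sub (hint hu) (hint hw), ← integral_const_mul]
  simp_rw [← inner_sub_left]
  refine norm_integral_le_of_norm_le ((hu.sub hw).norm.const_mul M) ?_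
  filter_upwards [hφM] with x hx
  rw [mul_comm]
  exact (norm_inner_le_norm _ _).trans (mul_le_mul_of_nonneg_left hx (norm_nonneg _))

variable [CompleteSpace H] {t M : ℝ}

lemma inner_integral_left {α : Type*} [MeasurableSpace α] {μ : Measure α} {f : α → H}
    (hf : Integrable f μ) (c : H) : ⟪∫ x, f x ∂μ, c⟫ = ∫ x, ⟪f x, c⟫ ∂μ := by
  rw [← inner_conj_symm, ← integral_inner hf, ← integral_conj]
  simp only [inner_conj_symm]

theorem integral_inner_halfPlanePoissonIntegral_left (ht : 0 < t) {g φ : ℝ → H}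
    (hg : Integrable g) (hφ : AEStronglyMeasurable φ) (hφM : ∀ᵐ s, ‖φ s‖ ≤ M) :
    ∫ s, ⟪halfPlanePoissonIntegral t g s, φ s⟫ = ∫ s, ⟪g s, halfPlanePoissonIntegral t φ s⟫ := by
  set F : ℝ → ℝ → ℂ := fun s s' => halfPlanePoissonKernel t (s - s') * ⟪g s', φ s⟫
  have hF : Integrable (Function.uncurry F) (volume.prod volume) := by
    have hφM' : ∀ᵐ p : ℝ × ℝ ∂volume.prod volume, ‖φ p.1‖ ≤ M :=
      Measure.QuasiMeasurePreserving.ae Measure.quasiMeasurePreserving_fst hφM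
    refine Integrable.mono' ((Integrable.convolution_integrand (ContinuousLinearMap.mul ℝ ℝ)
      hg.norm (integrable_halfPlanePoissonKernel ht.ne')).mul_const M) ?_ ?_
    · exact (Complex.continuous_ofReal.comp ((continuous_halfPlanePoissonKernel ht.ne').comp
        (continuous_fst.sub continuous_snd))).aestronglyMeasurable.mul
          (hg.aestronglyMeasurable.comp_snd.inner hφ.comp_fst)
    · filter_upwards [hφM'] with p hp
      have hPp := halfPlanePoissonKernel_nonneg ht.le (p.1 - p.2)
      simp only [F, Function.uncurry, norm_mul, Complex.norm_real, Real.norm_of_nonneg hPp,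
        ContinuousLinearMap.mul_apply']
      calc _ ≤ halfPlanePoissonKernel t (p.1 - p.2) * (‖g p.2‖ * M) :=
            mul_le_mul_of_nonneg_left ((norm_inner_le_norm _ _).trans
              (mul_le_mul_of_nonneg_left hp (norm_nonneg _))) hPp
        _ = _ := by ring
  calc ∫ s, ⟪halfPlanePoissonIntegral t g s, φ s⟫ = ∫ s, ∫ s', F s s' := by
        congr 1 with s
        rw [halfPlanePoissonIntegral, inner_integral_left (hg.halfPlanePoissonKernel_sub_smul ht s)]
        simp only [F, RCLike.real_smul_eq_coe_smul (K := ℂ), inner_smul_left, RCLike.conj_ofReal]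
        rfl
    _ = ∫ s', ∫ s, F s s' := integral_integral_swap hF
    _ = ∫ s, ⟪g s, halfPlanePoissonIntegral t φ s⟫ := by
        congr 1 with s'
        rw [halfPlanePoissonIntegral,
          ← integral_inner (integrable_halfPlanePoissonKernel_sub_smul_of_bound ht hφ hφM s')]
        simp only [F, RCLike.real_smul_eq_coe_smul (K := ℂ), inner_smul_right]
        simp_rw [← halfPlanePoissonKernel_neg t (s' - _), neg_sub]
        rfl

end InnerPairing

section WeakStarConvergence

variable {H : Type*} [NormedAddCommGroup H] [InnerProductSpace ℂ H] [CompleteSpace H] {M : ℝ}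
  {ι : Type*} {l : Filter ι} [l.IsCountablyGenerated] {ψ : ι → ℝ → H} {ψlim : ℝ → H}

theorem tendsto_integral_inner_halfPlanePoissonIntegral {t : ℝ} (ht : 0 < t) {g : ℝ → H}
    (hg : Integrable g) (hψ : ∀ᶠ τ in l, AEStronglyMeasurable (ψ τ) ∧ ∀ᵐ s, ‖ψ τ s‖ ≤ M)
    (hψlim : AEStronglyMeasurable ψlim) (hψlimM : ∀ᵐ s, ‖ψlim s‖ ≤ M)
    (hconv : ∀ s, Tendsto (fun τ => halfPlanePoissonIntegral t (ψ τ) s) l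
      (𝓝 (halfPlanePoissonIntegral t ψlim s))) :
    Tendsto (fun τ => ∫ s, ⟪halfPlanePoissonIntegral t g s, ψ τ s⟫) l
      (𝓝 (∫ s, ⟪halfPlanePoissonIntegral t g s, ψlim s⟫)) := by
  rw [integral_inner_halfPlanePoissonIntegral_left ht hg hψlim hψlimM]
  refine Tendsto.congr' (hψ.mono fun τ hτ =>
    (integral_inner_halfPlanePoissonIntegral_left ht hg hτ.1 hτ.2).symm) ?_
  refine tendsto_integral_filter_of_dominated_convergence (fun s => ‖g s‖ * M)
    (hψ.mono fun τ hτ => ?_) (hψ.mono fun τ hτ => ae_of_all _ fun s => ?_) (hg.norm.mul_const M)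
    (ae_of_all _ fun s => tendsto_const_nhds.inner (hconv s))
  · exact hg.aestronglyMeasurable.inner (hτ.1.halfPlanePoissonIntegral ht.ne')
  · exact (norm_inner_le_norm _ _).trans (mul_le_mul_of_nonneg_left
      (norm_halfPlanePoissonIntegral_le ht hτ.2 s) (norm_nonneg _))

theorem tendsto_integral_inner_of_tendsto_halfPlanePoissonIntegral
    (hψ : ∀ᶠ τ in l, AEStronglyMeasurable (ψ τ) ∧ ∀ᵐ s, ‖ψ τ s‖ ≤ M)
    (hψlim : AEStronglyMeasurable ψlim) (hψlimM : ∀ᵐ s, ‖ψlim s‖ ≤ M)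
    (hconv : ∀ t > 0, ∀ s, Tendsto (fun τ => halfPlanePoissonIntegral t (ψ τ) s) l
      (𝓝 (halfPlanePoissonIntegral t ψlim s)))
    {v : ℝ → H} (hv : Integrable v) :
    Tendsto (fun τ => ∫ s, ⟪v s, ψ τ s⟫) l (𝓝 (∫ s, ⟪v s, ψlim s⟫)) := by
  rw [Metric.tendsto_nhds]
  intro ε hε
  have happrox := (hv.tendsto_integral_norm_sub_halfPlanePoissonIntegral.const_mul M
    ).eventually_lt_const (v := M * 0) (u := ε / 3) (by simpa using hε)
  obtain ⟨t, hvt, ht⟩ := (happrox.and self_mem_nhdsWithin).exists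
  have hw := hv.integrable_halfPlanePoissonIntegral ht.ne'
  filter_upwards [Metric.tendsto_nhds.1 (tendsto_integral_inner_halfPlanePoissonIntegral ht hv
    hψ hψlim hψlimM (hconv t ht)) (ε / 3) (by positivity), hψ] with τ hτ hψτ
  have h1 := norm_integral_inner_sub_integral_inner_le hv hw hψτ.1 hψτ.2
  have h2 := norm_integral_inner_sub_integral_inner_le hv hw hψlim hψlimM
  rw [← dist_eq_norm] at h1 h2
  calc _ ≤ _ := dist_triangle4 _ (∫ s, ⟪halfPlanePoissonIntegral t v s, ψ τ s⟫)
          (∫ s, ⟪halfPlanePoissonIntegral t v s, ψlim s⟫) _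
    _ < ε := by rw [dist_comm _ (∫ s, ⟪v s, ψlim s⟫)]; linarith

end WeakStarConvergence

theorem stmt4_general {H : Type*} [NormedAddCommGroup H] [InnerProductSpace ℂ H] [CompleteSpace H]
    (M : ℝ)
    (ψ : ℝ → ℝ → H) (ψlim : ℝ → H)
    (hψmeas : ∀ τ ∈ Set.Ioo (0 : ℝ) 1, StronglyMeasurable (ψ τ))
    (hψbd : ∀ τ ∈ Set.Ioo (0 : ℝ) 1, ∀ᵐ s : ℝ, ‖ψ τ s‖ ≤ M)
    (hψlimmeas : StronglyMeasurable ψlim)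
    (hψlimbd : ∀ᵐ s : ℝ, ‖ψlim s‖ ≤ M)
    (P : ℝ → ℝ → ℝ) (hP : ∀ t s, P t s = (t / π) / (t ^ 2 + s ^ 2))
    (hconv : ∀ z : ℂ, 0 < z.re →
      Tendsto (fun τ : ℝ => ∫ s' : ℝ, P z.re (z.im - s') • ψ τ s')
        (nhdsWithin 0 (Set.Ioo 0 1))
        (nhds (∫ s' : ℝ, P z.re (z.im - s') • ψlim s')))
    (v : ℝ → H) (hv : Integrable v) :
    Tendsto (fun τ : ℝ => ∫ t : ℝ, ⟪v t, ψ τ t⟫) (nhdsWithin 0 (Set.Ioo 0 1))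
      (nhds (∫ t : ℝ, ⟪v t, ψlim t⟫)) := by
  obtain rfl : P = halfPlanePoissonKernel := funext fun t => funext (hP t)
  exact tendsto_integral_inner_of_tendsto_halfPlanePoissonIntegral
    (eventually_nhdsWithin_of_forall fun τ hτ => ⟨(hψmeas τ hτ).aestronglyMeasurable, hψbd τ hτ⟩)
    hψlimmeas.aestronglyMeasurable hψlimbd (fun t ht s => hconv ⟨t, s⟩ ht) hv

/-- Feldman-type theorem (vector form): if `ψ_τ`, `τ ∈ (0,1)`, and `ψ` are strongly
measurable `H`-valued functions on `ℝ`, uniformly bounded by `M`, and the Poisson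
extensions `Ψ_τ(t+is) = (P_t ∗ ψ_τ)(s)` converge pointwise on the open right half-plane
to `Ψ(t+is) = (P_t ∗ ψ)(s)` as `τ → 0⁺`, then for every `v ∈ L¹(ℝ, H)`,
`∫ ⟪v(t), ψ_τ(t)⟫ dt → ∫ ⟪v(t), ψ(t)⟫ dt` as `τ → 0⁺`. -/
theorem stmt4 {H : Type*} [NormedAddCommGroup H] [InnerProductSpace ℂ H] [CompleteSpace H]
    (M : ℝ) (hM : 0 < M)
    (ψ : ℝ → ℝ → H) (ψlim : ℝ → H)
    (hψmeas : ∀ τ ∈ Set.Ioo (0 : ℝ) 1, StronglyMeasurable (ψ τ))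
    (hψbd : ∀ τ ∈ Set.Ioo (0 : ℝ) 1, ∀ᵐ s : ℝ, ‖ψ τ s‖ ≤ M)
    (hψlimmeas : StronglyMeasurable ψlim)
    (hψlimbd : ∀ᵐ s : ℝ, ‖ψlim s‖ ≤ M)
    (P : ℝ → ℝ → ℝ) (hP : ∀ t s, P t s = (t / π) / (t ^ 2 + s ^ 2))
    (hconv : ∀ z : ℂ, 0 < z.re →
      Tendsto (fun τ : ℝ => ∫ s' : ℝ, P z.re (z.im - s') • ψ τ s')
        (nhdsWithin 0 (Set.Ioo 0 1))
        (nhds (∫ s' : ℝ, P z.re (z.im - s') • ψlim s')))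
    (v : ℝ → H) (hv : Integrable v) :
    Tendsto (fun τ : ℝ => ∫ t : ℝ, ⟪v t, ψ τ t⟫) (nhdsWithin 0 (Set.Ioo 0 1))
      (nhds (∫ t : ℝ, ⟪v t, ψlim t⟫)) :=
  stmt4_general M ψ ψlim hψmeas hψbd hψlimmeas hψlimbd P hP hconv v hv
end

section
/- Let H be a complex Hilbert space and M > 0. For each τ ∈ (0,1) let ψ_τ : ℝ → H be strongly measurable with ‖ψ_τ(s)‖ ≤ M for almost every s, and let ψ : ℝ → H be strongly measurable with ‖ψ(s)‖ ≤ M for almost every s. Define, for t > 0 and s ∈ ℝ, Ψ_τ(t + is) = (P_t ∗ ψ_τ)(s) and Ψ(t + is) = (P_t ∗ ψ)(s). Assume that for every z ∈ ℂ with Re z > 0, Ψ_τ(z) → Ψ(z) in H as τ → 0⁺. Then for every scalar function φ ∈ L¹(ℝ, ℂ), the Bochner integrals converge in the norm of H: ∫_ℝ φ(t) ψ_τ(t) dt → ∫_ℝ φ(t) ψ(t) dt as τ → 0⁺. -/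
/-!
The functionals `φ ↦ ∫ φ • ψ_τ` on `L¹(ℝ, ℂ)` have norm at most `M`, uniformly in `τ`, so it
suffices to prove their convergence on an `L¹`-dense set of test functions. The Poisson kernels
`P_t(s) = t⁻¹ C(s / t)`, `C` the standard Cauchy density, are an approximate identity, so the
functions `c(x) = ∫ P_t(y - x) φ₀(y) dy` are dense. For such `c`, Fubini gives
`∫ c • ψ_τ = ∫ φ₀(y) • Ψ_τ(t + iy) dy`, which converges by dominated convergence since
`‖Ψ_τ‖ ≤ M` and `Ψ_τ → Ψ` pointwise.
-/

open MeasureTheory Filter Real Set Topology ProbabilityTheory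
open scoped Pointwise

section Pairing

variable {α 𝕜 E : Type*} [MeasurableSpace α] {μ : Measure α} [NormedField 𝕜]
  [NormedAddCommGroup E] [NormedSpace ℝ E] [NormedSpace 𝕜 E]

theorem norm_integral_smul_le_of_ae_norm_le {f : α → 𝕜} {w : α → E} {M : ℝ}
    (hf : Integrable f μ) (hw : ∀ᵐ a ∂μ, ‖w a‖ ≤ M) :
    ‖∫ a, f a • w a ∂μ‖ ≤ (∫ a, ‖f a‖ ∂μ) * M := by
  rw [← integral_mul_const]
  refine norm_integral_le_of_norm_le (hf.norm.mul_const M) ?_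
  filter_upwards [hw] with a ha
  rw [norm_smul]
  exact mul_le_mul_of_nonneg_left ha (norm_nonneg _)

theorem norm_integral_smul_sub_integral_smul_le {f g : α → 𝕜} {w : α → E} {M : ℝ}
    (hf : Integrable f μ) (hg : Integrable g μ) (hw : AEStronglyMeasurable w μ)
    (hwM : ∀ᵐ a ∂μ, ‖w a‖ ≤ M) :
    ‖∫ a, f a • w a ∂μ - ∫ a, g a • w a ∂μ‖ ≤ (∫ a, ‖f a - g a‖ ∂μ) * M := by
  have hw' : MemLp w ⊤ μ := memLp_top_of_bound hw M hwM
  have hfw : Integrable (fun a => f a • w a) μ := hf.smul_of_top_left hw'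
  have hgw : Integrable (fun a => g a • w a) μ := hg.smul_of_top_left hw'
  rw [← integral_sub hfw hgw]
  simp_rw [← sub_smul]
  exact norm_integral_smul_le_of_ae_norm_le (hf.sub hg) hwM

theorem integral_norm_sub_le_add {F : Type*} [NormedAddCommGroup F] {f g h : α → F}
    (hf : Integrable f μ) (hg : Integrable g μ) (hh : Integrable h μ) :
    ∫ a, ‖f a - h a‖ ∂μ ≤ ∫ a, ‖f a - g a‖ ∂μ + ∫ a, ‖g a - h a‖ ∂μ := by
  have hfg : Integrable (fun a => ‖f a - g a‖) μ := (hf.sub hg).norm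
  have hgh : Integrable (fun a => ‖g a - h a‖) μ := (hg.sub hh).norm
  rw [← integral_add hfg hgh]
  exact integral_mono (hf.sub hh).norm (hfg.add hgh) fun a =>
    norm_sub_le_norm_sub_add_norm_sub _ _ _

theorem tendsto_integral_smul_of_forall_approx {ι : Type*} {l : Filter ι} {w : ι → α → E}
    {w₀ : α → E} {M : ℝ} (hM : 0 ≤ M)
    (hw : ∀ᶠ i in l, AEStronglyMeasurable (w i) μ ∧ ∀ᵐ a ∂μ, ‖w i a‖ ≤ M)
    (hw₀ : AEStronglyMeasurable w₀ μ) (hw₀M : ∀ᵐ a ∂μ, ‖w₀ a‖ ≤ M)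
    {f : α → 𝕜} (hf : Integrable f μ)
    (happrox : ∀ ε > 0, ∃ g : α → 𝕜, Integrable g μ ∧ ∫ a, ‖f a - g a‖ ∂μ ≤ ε ∧
      Tendsto (fun i => ∫ a, g a • w i a ∂μ) l (𝓝 (∫ a, g a • w₀ a ∂μ))) :
    Tendsto (fun i => ∫ a, f a • w i a ∂μ) l (𝓝 (∫ a, f a • w₀ a ∂μ)) := by
  rw [Metric.tendsto_nhds]
  intro ε hε
  obtain ⟨g, hg, hfg, hlim⟩ := happrox (ε / (3 * (M + 1))) (by positivity)
  have herr : (∫ a, ‖f a - g a‖ ∂μ) * M < ε / 3 := by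
    calc (∫ a, ‖f a - g a‖ ∂μ) * M ≤ ε / (3 * (M + 1)) * M := by gcongr
      _ < ε / 3 := by
        rw [div_mul_eq_mul_div, div_lt_div_iff₀ (by positivity) (by positivity)]
        nlinarith
  filter_upwards [hw, Metric.tendsto_nhds.1 hlim (ε / 3) (by positivity)] with i ⟨hwi, hwiM⟩ hi
  calc dist (∫ a, f a • w i a ∂μ) (∫ a, f a • w₀ a ∂μ)
      ≤ dist (∫ a, f a • w i a ∂μ) (∫ a, g a • w i a ∂μ)
        + dist (∫ a, g a • w i a ∂μ) (∫ a, g a • w₀ a ∂μ)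
        + dist (∫ a, g a • w₀ a ∂μ) (∫ a, f a • w₀ a ∂μ) := dist_triangle4 _ _ _ _
    _ < ε / 3 + ε / 3 + ε / 3 := by
        gcongr
        · rw [dist_eq_norm]
          exact (norm_integral_smul_sub_integral_smul_le hf hg hwi hwiM).trans_lt herr
        · rw [dist_comm, dist_eq_norm]
          exact (norm_integral_smul_sub_integral_smul_le hf hg hw₀ hw₀M).trans_lt herr
    _ = ε := by ring

end Pairing

section Correlation

variable {E : Type*} [NormedAddCommGroup E] [NormedSpace ℝ E] {k : ℝ → ℝ}

theorem MeasureTheory.Integrable.correlation_integrand (hk : Integrable k) {φ : ℝ → E}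
    (hφ : Integrable φ) :
    Integrable (fun p : ℝ × ℝ => k (p.2 - p.1) • φ p.2) (volume.prod volume) := by
  simpa [neg_sub] using hφ.convolution_integrand (ContinuousLinearMap.lsmul ℝ ℝ).flip hk.comp_neg

theorem MeasureTheory.Integrable.integrable_correlation (hk : Integrable k) {φ : ℝ → E}
    (hφ : Integrable φ) :
    Integrable (fun x => ∫ y, k (y - x) • φ y) :=
  (hk.correlation_integrand hφ).integral_prod_left

variable {H : Type*} [NormedAddCommGroup H] [NormedSpace ℂ H] [CompleteSpace H]

-- The test functions are correlations rather than convolutions so that Fubini produces exactly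
-- the Poisson integrals `∫ P_t(y - s) • ψ(s) ds` of the hypothesis, with no symmetry of `k`.
theorem integral_correlation_smul_eq (hk : Integrable k) {φ : ℝ → ℂ} (hφ : Integrable φ)
    {w : ℝ → H} {M : ℝ} (hw : AEStronglyMeasurable w) (hwM : ∀ᵐ s, ‖w s‖ ≤ M) :
    ∫ x, (∫ y, k (y - x) • φ y) • w x = ∫ y, φ y • ∫ x, k (y - x) • w x := by
  have hw' : MemLp (fun p : ℝ × ℝ => w p.1) ⊤ (volume.prod volume) :=
    memLp_top_of_bound hw.comp_fst M (Measure.quasiMeasurePreserving_fst.ae hwM)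
  have hprod : Integrable (fun p : ℝ × ℝ => (k (p.2 - p.1) • φ p.2) • w p.1)
      (volume.prod volume) :=
    (hk.correlation_integrand hφ).smul_of_top_left hw'
  calc ∫ x, (∫ y, k (y - x) • φ y) • w x
      = ∫ x, ∫ y, (k (y - x) • φ y) • w x := by simp_rw [integral_smul_const]
    _ = ∫ y, ∫ x, (k (y - x) • φ y) • w x := integral_integral_swap hprod
    _ = ∫ y, φ y • ∫ x, k (y - x) • w x := by
        simp_rw [← integral_smul, smul_assoc, smul_comm (φ _)]

theorem tendsto_integral_smul_correlation {ι : Type*} {l : Filter ι} [l.IsCountablyGenerated]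
    (hk : Integrable k) {φ : ℝ → ℂ} (hφ : Integrable φ) {w : ι → ℝ → H} {w₀ : ℝ → H} {M : ℝ}
    (hw : ∀ᶠ i in l, AEStronglyMeasurable (w i) ∧ ∀ᵐ s, ‖w i s‖ ≤ M)
    (hw₀ : AEStronglyMeasurable w₀) (hw₀M : ∀ᵐ s, ‖w₀ s‖ ≤ M)
    (hlim : ∀ y, Tendsto (fun i => ∫ s, k (y - s) • w i s) l (𝓝 (∫ s, k (y - s) • w₀ s))) :
    Tendsto (fun i => ∫ x, (∫ y, k (y - x) • φ y) • w i x) l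
      (𝓝 (∫ x, (∫ y, k (y - x) • φ y) • w₀ x)) := by
  rw [integral_correlation_smul_eq hk hφ hw₀ hw₀M]
  refine Tendsto.congr' (hw.mono fun i ⟨hwi, hwiM⟩ =>
    (integral_correlation_smul_eq hk hφ hwi hwiM).symm) ?_
  refine tendsto_integral_filter_of_dominated_convergence (fun y => ‖φ y‖ * ((∫ s, ‖k s‖) * M))
    ?_ ?_ (hφ.norm.mul_const _) (Eventually.of_forall fun y => (hlim y).const_smul (φ y))
  · filter_upwards [hw] with i hwi
    exact hφ.aestronglyMeasurable.smul
      (hwi.1.convolution_integrand (ContinuousLinearMap.lsmul ℝ ℝ).flip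
        hk.aestronglyMeasurable).integral_prod_right'
  · filter_upwards [hw] with i hwi
    refine Eventually.of_forall fun y => ?_
    rw [norm_smul]
    gcongr
    have hky := norm_integral_smul_le_of_ae_norm_le (hk.comp_sub_left y) hwi.2
    rwa [integral_sub_left_eq_self (fun s => ‖k s‖) volume y] at hky

end Correlation

section Approximation

variable {E : Type*} [NormedAddCommGroup E]

theorem integral_norm_sub_correlation_le [NormedSpace ℝ E] [CompleteSpace E] {k : ℝ → ℝ}
    (hk : Integrable k) (hk1 : ∫ s, k s = 1) {φ : ℝ → E} (hφ : Integrable φ) :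
    ∫ x, ‖φ x - ∫ y, k (y - x) • φ y‖ ≤ ∫ s, ‖k s‖ * ∫ x, ‖φ x - φ (x + s)‖ := by
  have hshift : Integrable (fun p : ℝ × ℝ => k p.2 • φ (p.1 + p.2)) (volume.prod volume) := by
    simpa [Function.comp_def] using
      (measurePreserving_prod_add volume volume).integrable_comp_of_integrable
        (hk.correlation_integrand hφ)
  have hdiff : Integrable (fun p : ℝ × ℝ => k p.2 • (φ p.1 - φ (p.1 + p.2)))
      (volume.prod volume) := by
    refine ((hk.smul_prod hφ).swap.sub hshift).congr (Eventually.of_forall fun p => ?_)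
    simp [smul_sub]
  have hpoint : ∀ᵐ x, ‖φ x - ∫ y, k (y - x) • φ y‖ ≤ ∫ s, ‖k s • (φ x - φ (x + s))‖ := by
    filter_upwards [hshift.prod_right_ae] with x hx
    have hdiffx : φ x - ∫ s, k s • φ (x + s) = ∫ s, k s • (φ x - φ (x + s)) := by
      simp_rw [smul_sub]
      rw [integral_sub (hk.smul_const _) hx, integral_smul_const, hk1, one_smul]
    rw [← integral_add_left_eq_self (fun y => k (y - x) • φ y) x]
    simp only [add_sub_cancel_left]
    rw [hdiffx]
    exact norm_integral_le_integral_norm _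
  calc ∫ x, ‖φ x - ∫ y, k (y - x) • φ y‖
      ≤ ∫ x, ∫ s, ‖k s • (φ x - φ (x + s))‖ :=
        integral_mono_of_nonneg (Eventually.of_forall fun x => norm_nonneg _)
          hdiff.norm.integral_prod_left hpoint
    _ = ∫ s, ∫ x, ‖k s • (φ x - φ (x + s))‖ := integral_integral_swap hdiff.norm
    _ = ∫ s, ‖k s‖ * ∫ x, ‖φ x - φ (x + s)‖ := by simp_rw [norm_smul, integral_const_mul]

theorem integral_norm_sub_comp_add_le {φ : ℝ → E} (hφ : Integrable φ) (s : ℝ) :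
    ∫ x, ‖φ x - φ (x + s)‖ ≤ 2 * ∫ x, ‖φ x‖ := by
  have hφs : Integrable (fun x => ‖φ (x + s)‖) := hφ.norm.comp_add_right s
  calc ∫ x, ‖φ x - φ (x + s)‖ ≤ ∫ x, (‖φ x‖ + ‖φ (x + s)‖) :=
        integral_mono (hφ.sub (hφ.comp_add_right s)).norm (hφ.norm.add hφs)
          fun x => norm_sub_le _ _
    _ = 2 * ∫ x, ‖φ x‖ := by
        rw [integral_add hφ.norm hφs, integral_add_right_eq_self (fun x => ‖φ x‖) s]
        ring

theorem continuous_integral_norm_sub_comp_add {φ : ℝ → E} (hφ : Continuous φ)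
    (hφc : HasCompactSupport φ) : Continuous fun s => ∫ x, ‖φ x - φ (x + s)‖ := by
  refine continuous_iff_continuousAt.2 fun s₀ => ?_
  set R := |s₀| + 1
  have hon : ContinuousOn (fun s => ∫ x, ‖φ x - φ (x + s)‖) (Icc (-R) R) := by
    refine continuousOn_integral_of_compact_support (k := tsupport φ + Icc (-R) R)
      (hφc.isCompact.add isCompact_Icc) (by fun_prop) fun s x hs hx => ?_
    have hR : (0 : ℝ) ∈ Icc (-R) R := ⟨neg_nonpos.2 (by positivity), by positivity⟩
    have h0 : φ x = 0 := image_eq_zero_of_notMem_tsupport fun h => hx ⟨x, h, 0, hR, add_zero x⟩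
    have hs' : -s ∈ Icc (-R) R := ⟨neg_le_neg hs.2, by linarith [hs.1]⟩
    have h1 : φ (x + s) = 0 := image_eq_zero_of_notMem_tsupport fun h =>
      hx ⟨x + s, h, -s, hs', add_neg_cancel_right x s⟩
    simp [h0, h1]
  refine hon.continuousAt (Icc_mem_nhds ?_ ?_) <;> linarith [neg_abs_le s₀, le_abs_self s₀]

theorem MeasureTheory.Integrable.inv_mul_comp_div {K : ℝ → ℝ} (hK : Integrable K) {t : ℝ}
    (ht : t ≠ 0) : Integrable fun s => t⁻¹ * K (s / t) :=
  (hK.comp_div ht).const_mul _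

theorem tendsto_integral_dilation_mul {K g : ℝ → ℝ} (hK : Integrable K) (hg : Continuous g)
    {B : ℝ} (hgB : ∀ s, |g s| ≤ B) :
    Tendsto (fun t => ∫ s, t⁻¹ * K (s / t) * g s) (𝓝[>] 0) (𝓝 ((∫ u, K u) * g 0)) := by
  have hscale : ∀ t > (0 : ℝ), ∫ s, t⁻¹ * K (s / t) * g s = ∫ u, K u * g (t * u) := by
    intro t ht
    have h := Measure.integral_comp_mul_left (fun s => t⁻¹ * K (s / t) * g s) t
    rw [abs_of_pos (inv_pos.2 ht), smul_eq_mul] at h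
    rw [← mul_inv_cancel_left₀ ht.ne' (∫ s, t⁻¹ * K (s / t) * g s), ← h, ← integral_const_mul]
    congr 1 with u
    field_simp
  rw [← integral_mul_const]
  refine Tendsto.congr' (eventually_nhdsWithin_of_forall fun t ht => (hscale t ht).symm) ?_
  refine tendsto_integral_filter_of_dominated_convergence (fun u => ‖K u‖ * B)
    (Eventually.of_forall fun t => hK.aestronglyMeasurable.mul (by fun_prop))
    (Eventually.of_forall fun t => Eventually.of_forall fun u => ?_) (hK.norm.mul_const B)
    (Eventually.of_forall fun u => ?_)
  · rw [norm_mul]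
    exact mul_le_mul_of_nonneg_left (hgB _) (norm_nonneg _)
  · refine (Tendsto.const_mul (K u) ?_).mono_left nhdsWithin_le_nhds
    simpa [Function.comp_def] using (hg.comp (continuous_mul_const u)).tendsto (0 : ℝ)

theorem tendsto_integral_norm_sub_dilation_correlation [NormedSpace ℝ E] [CompleteSpace E]
    {K : ℝ → ℝ} (hK : Integrable K) (hK1 : ∫ u, K u = 1) {φ : ℝ → E} (hφ : Continuous φ)
    (hφc : HasCompactSupport φ) :
    Tendsto (fun t => ∫ x, ‖φ x - ∫ y, (t⁻¹ * K ((y - x) / t)) • φ y‖) (𝓝[>] 0) (𝓝 0) := by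
  have hφi : Integrable φ := hφ.integrable_of_hasCompactSupport hφc
  have hbound : ∀ s, |∫ x, ‖φ x - φ (x + s)‖| ≤ 2 * ∫ x, ‖φ x‖ := fun s =>
    (abs_of_nonneg (integral_nonneg fun x => norm_nonneg _)).trans_le
      (integral_norm_sub_comp_add_le hφi s)
  have hlim := tendsto_integral_dilation_mul hK.norm
    (continuous_integral_norm_sub_comp_add hφ hφc) hbound
  simp only [add_zero, sub_self, norm_zero, integral_zero, mul_zero] at hlim
  refine squeeze_zero' (Eventually.of_forall fun t => integral_nonneg fun x => norm_nonneg _)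
    (eventually_nhdsWithin_of_forall fun t ht => ?_) hlim
  have hkt1 : ∫ s, t⁻¹ * K (s / t) = 1 := by
    rw [integral_const_mul, Measure.integral_comp_div, hK1, abs_of_pos ht, smul_eq_mul, mul_one,
      inv_mul_cancel₀ ht.ne']
  refine (integral_norm_sub_correlation_le (hK.inv_mul_comp_div ht.ne') hkt1 hφi).trans_eq ?_
  congr 1 with s
  rw [norm_mul, norm_inv, Real.norm_of_nonneg ht.le]

theorem exists_integral_norm_sub_dilation_correlation_le [NormedSpace ℝ E] [CompleteSpace E]
    {K : ℝ → ℝ} (hK : Integrable K) (hK1 : ∫ u, K u = 1) {φ : ℝ → E} (hφ : Integrable φ)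
    {ε : ℝ} (hε : 0 < ε) :
    ∃ φ₀ : ℝ → E, Integrable φ₀ ∧
      ∃ t > 0, ∫ x, ‖φ x - ∫ y, (t⁻¹ * K ((y - x) / t)) • φ₀ y‖ ≤ ε := by
  obtain ⟨φ₀, hφ₀c, hφφ₀, hφ₀, hφ₀i⟩ := hφ.exists_hasCompactSupport_integral_sub_le (half_pos hε)
  obtain ⟨t, htε, ht⟩ :=
    (((tendsto_integral_norm_sub_dilation_correlation hK hK1 hφ₀ hφ₀c).eventually
      (ge_mem_nhds (half_pos hε))).and self_mem_nhdsWithin).exists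
  refine ⟨φ₀, hφ₀i, t, ht, ?_⟩
  calc _ ≤ _ := integral_norm_sub_le_add hφ hφ₀i
          ((hK.inv_mul_comp_div ht.ne').integrable_correlation hφ₀i)
    _ ≤ ε / 2 + ε / 2 := add_le_add hφφ₀ htε
    _ = ε := add_halves ε

end Approximation

theorem inv_mul_cauchyPDFReal_div (t s : ℝ) :
    t⁻¹ * cauchyPDFReal 0 1 (s / t) = t / π / (t ^ 2 + s ^ 2) := by
  rcases eq_or_ne t 0 with rfl | ht
  · simp
  rw [cauchyPDFReal_def, NNReal.coe_one]
  field_simp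
  ring

/-- Feldman-type theorem (vector form): if `ψ_τ`, `τ ∈ (0,1)`, and `ψ` are strongly
measurable `H`-valued functions on `ℝ`, uniformly bounded by `M`, and the Poisson
extensions `Ψ_τ(t+is) = (P_t ∗ ψ_τ)(s)` converge pointwise on the open right half-plane
to `Ψ(t+is) = (P_t ∗ ψ)(s)` as `τ → 0⁺`, then for every scalar `φ ∈ L¹(ℝ, ℂ)`,
the Bochner integrals `∫ φ(t) ψ_τ(t) dt` converge in `H` to `∫ φ(t) ψ(t) dt` as `τ → 0⁺`. -/
theorem stmt5 {H : Type*} [NormedAddCommGroup H] [InnerProductSpace ℂ H] [CompleteSpace H]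
    (M : ℝ) (hM : 0 < M)
    (ψ : ℝ → ℝ → H) (ψlim : ℝ → H)
    (hψmeas : ∀ τ ∈ Set.Ioo (0 : ℝ) 1, StronglyMeasurable (ψ τ))
    (hψbd : ∀ τ ∈ Set.Ioo (0 : ℝ) 1, ∀ᵐ s : ℝ, ‖ψ τ s‖ ≤ M)
    (hψlimmeas : StronglyMeasurable ψlim)
    (hψlimbd : ∀ᵐ s : ℝ, ‖ψlim s‖ ≤ M)
    (P : ℝ → ℝ → ℝ) (hP : ∀ t s, P t s = (t / π) / (t ^ 2 + s ^ 2))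
    (hconv : ∀ z : ℂ, 0 < z.re →
      Tendsto (fun τ : ℝ => ∫ s' : ℝ, P z.re (z.im - s') • ψ τ s')
        (nhdsWithin 0 (Set.Ioo 0 1))
        (nhds (∫ s' : ℝ, P z.re (z.im - s') • ψlim s')))
    (φ : ℝ → ℂ) (hφ : Integrable φ) :
    Tendsto (fun τ : ℝ => ∫ t : ℝ, φ t • ψ τ t) (nhdsWithin 0 (Set.Ioo 0 1))
      (nhds (∫ t : ℝ, φ t • ψlim t)) := by
  obtain rfl : P = fun t s => t⁻¹ * cauchyPDFReal 0 1 (s / t) := by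
    ext t s
    rw [hP, inv_mul_cauchyPDFReal_div]
  have hK : Integrable (cauchyPDFReal 0 1) := integrable_cauchyPDFReal 0
  have hK1 : ∫ u, cauchyPDFReal 0 1 u = 1 := integral_cauchyPDFReal_eq_one 0 one_ne_zero
  have hψ : ∀ᶠ τ in 𝓝[Ioo 0 1] 0, AEStronglyMeasurable (ψ τ) ∧ ∀ᵐ s, ‖ψ τ s‖ ≤ M :=
    eventually_nhdsWithin_of_forall fun τ hτ => ⟨(hψmeas τ hτ).aestronglyMeasurable, hψbd τ hτ⟩
  refine tendsto_integral_smul_of_forall_approx hM.le hψ hψlimmeas.aestronglyMeasurable hψlimbd hφ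
    fun ε hε => ?_
  obtain ⟨φ₀, hφ₀, t, ht, hφt⟩ := exists_integral_norm_sub_dilation_correlation_le hK hK1 hφ hε
  have hkt := hK.inv_mul_comp_div ht.ne'
  exact ⟨_, hkt.integrable_correlation hφ₀, hφt, tendsto_integral_smul_correlation hkt hφ₀ hψ
    hψlimmeas.aestronglyMeasurable hψlimbd fun y => hconv ⟨t, y⟩ ht⟩
end
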